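/- arXiv:1609.02131 — 4 statements merged into one kernel-verified Lean document; each statement's English description precedes it below -/
import Mathlib

section
/- For β ∈ (1,2), the sequence H_n(β) is subadditive: H_{m+n}(β) ≤ H_m(β) + H_n(β) for all m, n ≥ 1. Consequently the limit H_β = lim_{n→∞} H_n(β)/(n log β) exists. -/
open scoped Classical

/-- The value `∑_{k=1}^n a_k β^{-k}` of a 0-1 word `a`. -/
noncomputable def wordVal (β : ℝ) {n : ℕ} (a : Fin n → Bool) : ℝ :=
  ∑ i : Fin n, if a i then (1 / β) ^ ((i : ℕ) + 1) else 0

/-- `D_n(β)`, the (finite) set of values of all 0-1 words of length `n`. -/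
noncomputable def Dn (β : ℝ) (n : ℕ) : Finset ℝ :=
  Finset.image (fun a : Fin n → Bool => wordVal β a) Finset.univ

/-- `p_n(x)`, the number of 0-1 words of length `n` with value `x`. -/
noncomputable def pn (β : ℝ) (n : ℕ) (x : ℝ) : ℕ :=
  (Finset.univ.filter (fun a : Fin n → Bool => wordVal β a = x)).card

/-- `H_n(β)`, the entropy of the distribution `{p_n(x)/2^n : x ∈ D_n(β)}`. -/
noncomputable def Hn (β : ℝ) (n : ℕ) : ℝ :=
  -∑ x ∈ Dn β n, ((pn β n x : ℝ) / 2 ^ n) * Real.log ((pn β n x : ℝ) / 2 ^ n)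

lemma pn_pos (β : ℝ) {n : ℕ} (a : Fin n → Bool) : 0 < pn β n (wordVal β a) := by
  apply Finset.card_pos.2
  exact ⟨a, by simp⟩

lemma pn_le (β : ℝ) (n : ℕ) (x : ℝ) : pn β n x ≤ 2 ^ n := by
  calc pn β n x ≤ (Finset.univ : Finset (Fin n → Bool)).card := Finset.card_filter_le _ _
  _ = 2 ^ n := by simp

lemma wordVal_append (β : ℝ) {m n : ℕ} (a : Fin m → Bool) (b : Fin n → Bool) :
    wordVal β (Fin.append a b) = wordVal β a + (1 / β) ^ m * wordVal β b := by
  unfold wordVal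
  rw [Fin.sum_univ_add, Finset.mul_sum]
  congr 1
  · refine Finset.sum_congr rfl fun i _ => ?_
    rw [Fin.append_left]
    norm_num
  · refine Finset.sum_congr rfl fun i _ => ?_
    rw [Fin.append_right, mul_ite, mul_zero, ← pow_add]
    have hc : ((Fin.natAdd m i : Fin (m + n)) : ℕ) + 1 = m + ((i : ℕ) + 1) := by
      simp only [Fin.coe_natAdd]
      omega
    rw [hc]

lemma append_injective (m n : ℕ) :
    Function.Injective (fun p : (Fin m → Bool) × (Fin n → Bool) => Fin.append p.1 p.2) := by
  rintro ⟨a, b⟩ ⟨a', b'⟩ h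
  have h' : Fin.append a b = Fin.append a' b' := h
  simp only [Prod.mk.injEq]
  constructor
  · funext i
    have := congrFun h' (Fin.castAdd n i)
    rwa [Fin.append_left, Fin.append_left] at this
  · funext i
    have := congrFun h' (Fin.natAdd m i)
    rwa [Fin.append_right, Fin.append_right] at this

lemma pn_mul_le (β : ℝ) (m n : ℕ) (x y : ℝ) :
    pn β m x * pn β n y ≤ pn β (m + n) (x + (1 / β) ^ m * y) := by
  classical
  unfold pn
  rw [← Finset.card_product]
  apply Finset.card_le_card_of_injOn (fun p => Fin.append p.1 p.2)
  · rintro ⟨a, b⟩ hp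
    simp only [Finset.mem_coe, Finset.mem_product, Finset.mem_filter, Finset.mem_univ, true_and] at hp ⊢
    rw [wordVal_append, hp.1, hp.2]
  · exact fun p _ q _ h => append_injective m n h

/-- The sum of `log (p_n(val a)/2^n)` over all words `a`. -/
noncomputable def Fv (β : ℝ) (n : ℕ) : ℝ :=
  ∑ a : Fin n → Bool, Real.log ((pn β n (wordVal β a) : ℝ) / 2 ^ n)

lemma Hn_eq (β : ℝ) (n : ℕ) : Hn β n = -(Fv β n / 2 ^ n) := by
  unfold Hn Fv
  rw [Finset.sum_comp (fun x : ℝ => Real.log ((pn β n x : ℝ) / 2 ^ n))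
      (fun a : Fin n → Bool => wordVal β a)]
  rw [neg_inj, Finset.sum_div]
  unfold Dn pn
  refine Finset.sum_congr rfl fun x _ => ?_
  rw [nsmul_eq_mul]
  ring

lemma Fv_super (β : ℝ) (hβ1 : 1 < β) (m n : ℕ) :
    2 ^ n * Fv β m + 2 ^ m * Fv β n ≤ Fv β (m + n) := by
  have hbij : Function.Bijective
      (fun p : (Fin m → Bool) × (Fin n → Bool) => Fin.append p.1 p.2) := by
    rw [Fintype.bijective_iff_injective_and_card]
    refine ⟨append_injective m n, ?_⟩
    simp [pow_add]
  have key : Fv β (m + n) =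
      ∑ p : (Fin m → Bool) × (Fin n → Bool),
        Real.log ((pn β (m + n) (wordVal β (Fin.append p.1 p.2)) : ℝ) / 2 ^ (m + n)) := by
    unfold Fv
    exact (Function.Bijective.sum_comp hbij
      (fun c => Real.log ((pn β (m + n) (wordVal β c) : ℝ) / 2 ^ (m + n)))).symm
  rw [key]
  have hterm : ∀ (a : Fin m → Bool) (b : Fin n → Bool),
      Real.log ((pn β m (wordVal β a) : ℝ) / 2 ^ m)
        + Real.log ((pn β n (wordVal β b) : ℝ) / 2 ^ n)
      ≤ Real.log ((pn β (m + n) (wordVal β (Fin.append a b)) : ℝ) / 2 ^ (m + n)) := by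
    intro a b
    have ha : (0 : ℝ) < (pn β m (wordVal β a) : ℝ) := by exact_mod_cast pn_pos β a
    have hb : (0 : ℝ) < (pn β n (wordVal β b) : ℝ) := by exact_mod_cast pn_pos β b
    have h2m : (0 : ℝ) < 2 ^ m := by positivity
    have h2n : (0 : ℝ) < 2 ^ n := by positivity
    have hle : (pn β m (wordVal β a) : ℝ) * (pn β n (wordVal β b) : ℝ)
        ≤ (pn β (m + n) (wordVal β (Fin.append a b)) : ℝ) := by
      rw [wordVal_append]
      exact_mod_cast pn_mul_le β m n (wordVal β a) (wordVal β b)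
    calc Real.log ((pn β m (wordVal β a) : ℝ) / 2 ^ m)
          + Real.log ((pn β n (wordVal β b) : ℝ) / 2 ^ n)
        = Real.log (((pn β m (wordVal β a) : ℝ) * (pn β n (wordVal β b) : ℝ)) / 2 ^ (m + n)) := by
          rw [pow_add, ← Real.log_mul (by positivity) (by positivity)]
          rw [div_mul_div_comm]
      _ ≤ _ := by
          apply Real.log_le_log (by positivity)
          gcongr
  calc 2 ^ n * Fv β m + 2 ^ m * Fv β n
      = ∑ p : (Fin m → Bool) × (Fin n → Bool),
          (Real.log ((pn β m (wordVal β p.1) : ℝ) / 2 ^ m)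
            + Real.log ((pn β n (wordVal β p.2) : ℝ) / 2 ^ n)) := by
        rw [Finset.sum_add_distrib]
        congr 1
        · rw [Fintype.sum_prod_type]
          simp only [Finset.sum_const, Finset.card_univ, nsmul_eq_mul, ← Finset.mul_sum]
          unfold Fv
          congr 1
          rw [Fintype.card_fun]
          push_cast
          simp
        · rw [Fintype.sum_prod_type_right]
          simp only [Finset.sum_const, Finset.card_univ, nsmul_eq_mul, ← Finset.mul_sum]
          unfold Fv
          congr 1
          rw [Fintype.card_fun]
          push_cast
          simp
    _ ≤ _ := Finset.sum_le_sum fun p _ => hterm p.1 p.2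

lemma Hn_subadd (β : ℝ) (hβ1 : 1 < β) : Subadditive (Hn β) := by
  intro m n
  rw [Hn_eq, Hn_eq, Hn_eq]
  have h := Fv_super β hβ1 m n
  have h2m : (0 : ℝ) < 2 ^ m := by positivity
  have h2n : (0 : ℝ) < 2 ^ n := by positivity
  have key : Fv β m / 2 ^ m + Fv β n / 2 ^ n ≤ Fv β (m + n) / 2 ^ (m + n) := by
    rw [div_add_div _ _ (ne_of_gt h2m) (ne_of_gt h2n),
      div_le_div_iff₀ (by positivity) (by positivity), pow_add]
    nlinarith [mul_le_mul_of_nonneg_right h (le_of_lt (mul_pos h2m h2n))]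
  linarith

lemma Hn_nonneg (β : ℝ) (n : ℕ) : 0 ≤ Hn β n := by
  unfold Hn
  rw [neg_nonneg]
  apply Finset.sum_nonpos
  intro x hx
  rcases Nat.eq_zero_or_pos (pn β n x) with h | h
  · simp [h]
  · apply mul_nonpos_of_nonneg_of_nonpos
    · positivity
    · apply Real.log_nonpos (by positivity)
      rw [div_le_one (by positivity)]
      exact_mod_cast pn_le β n x

theorem Hn_subadditive_and_limit_exists (β : ℝ) (hβ1 : 1 < β) (hβ2 : β < 2) :
    (∀ m n : ℕ, 1 ≤ m → 1 ≤ n → Hn β (m + n) ≤ Hn β m + Hn β n) ∧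
    ∃ L : ℝ, Filter.Tendsto (fun n : ℕ => Hn β n / (n * Real.log β))
      Filter.atTop (nhds L) := by
  have hsub := Hn_subadd β hβ1
  constructor
  · exact fun m n _ _ => hsub m n
  · have hbdd : BddBelow (Set.range fun n : ℕ => Hn β n / n) := by
      refine ⟨0, ?_⟩
      rintro x ⟨n, rfl⟩
      exact div_nonneg (Hn_nonneg β n) (Nat.cast_nonneg n)
    have h := hsub.tendsto_lim hbdd
    refine ⟨hsub.lim / Real.log β, ?_⟩
    have := h.div_const (Real.log β)
    convert this using 2 with n
    rw [div_div]
end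

section
/- For β ∈ (1,2) and any integer k ≥ 2, Garsia's entropy satisfies H_β ≥ H_{β^k} whenever β^k < 2 (more generally, lim H_{kn}(β)/(kn log β) ≥ lim H_n(β^k)/(n log β^k)), where the key inequality is H_{kn}(β) ≥ H_n(β^k) for all n. -/
open scoped Classical

/-! ### Auxiliary general entropy machinery -/

noncomputable def entPhi (t : ℝ) : ℝ := t * Real.log t

@[simp] lemma entPhi_zero : entPhi 0 = 0 := by simp [entPhi]

noncomputable def cnt {ι : Type*} [Fintype ι] (f : ι → ℝ) (x : ℝ) : ℕ :=
  (Finset.univ.filter fun i => f i = x).card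

noncomputable def ent {ι : Type*} [Fintype ι] (f : ι → ℝ) : ℝ :=
  -∑ x ∈ Finset.image f Finset.univ, entPhi ((cnt f x : ℝ) / (Fintype.card ι : ℝ))

lemma cnt_comp_equiv {ι ι' : Type*} [Fintype ι] [Fintype ι'] (e : ι' ≃ ι) (f : ι → ℝ)
    (x : ℝ) : cnt (f ∘ e) x = cnt f x := by
  unfold cnt
  rw [← Fintype.card_subtype, ← Fintype.card_subtype]
  exact Fintype.card_congr (e.subtypeEquiv fun i => Iff.rfl)

lemma image_comp_equiv {ι ι' : Type*} [Fintype ι] [Fintype ι'] (e : ι' ≃ ι) (f : ι → ℝ) :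
    Finset.image (f ∘ e) Finset.univ = Finset.image f Finset.univ := by
  ext x
  simp only [Finset.mem_image, Finset.mem_univ, true_and, Function.comp]
  constructor
  · rintro ⟨i, hi⟩; exact ⟨e i, hi⟩
  · rintro ⟨i, hi⟩; exact ⟨e.symm i, by simpa using hi⟩

lemma ent_comp_equiv {ι ι' : Type*} [Fintype ι] [Fintype ι'] (e : ι' ≃ ι) (f : ι → ℝ) :
    ent (f ∘ e) = ent f := by
  unfold ent
  rw [image_comp_equiv e f, Fintype.card_congr e]
  congr 1
  exact Finset.sum_congr rfl fun x _ => by rw [cnt_comp_equiv e f x]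

lemma cnt_conv {A B : Type*} [Fintype A] [Fintype B] (f : A → ℝ) (g : B → ℝ) (x : ℝ) :
    cnt (fun p : A × B => f p.1 + g p.2) x = ∑ b : B, cnt f (x - g b) := by
  unfold cnt
  rw [Finset.card_filter, Fintype.sum_prod_type_right]
  refine Finset.sum_congr rfl fun b _ => ?_
  rw [Finset.card_filter]
  refine Finset.sum_congr rfl fun a _ => ?_
  congr 1
  simp [eq_sub_iff_add_eq]

/-- Entropy of an independent sum dominates the entropy of a summand. -/
lemma ent_le_ent_add {A B : Type*} [Fintype A] [Fintype B] [Nonempty A] [Nonempty B]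
    (f : A → ℝ) (g : B → ℝ) : ent f ≤ ent (fun p : A × B => f p.1 + g p.2) := by
  classical
  set h : A × B → ℝ := fun p => f p.1 + g p.2 with hh
  set M : ℝ := (Fintype.card A : ℝ) with hM
  set N : ℝ := (Fintype.card B : ℝ) with hN
  have hM0 : 0 < M := by rw [hM]; exact_mod_cast (Fintype.card_pos : 0 < Fintype.card A)
  have hN0 : 0 < N := by rw [hN]; exact_mod_cast (Fintype.card_pos : 0 < Fintype.card B)
  set S : Finset ℝ := Finset.image h Finset.univ with hS
  set E : ℝ := ∑ y ∈ Finset.image f Finset.univ, entPhi ((cnt f y : ℝ) / M) with hE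
  -- Jensen pointwise
  have key : ∀ x ∈ S, entPhi ((cnt h x : ℝ) / (M * N)) ≤
      ∑ b : B, (1 / N) * entPhi ((cnt f (x - g b) : ℝ) / M) := by
    intro x _
    have hc : (cnt h x : ℝ) = ∑ b : B, (cnt f (x - g b) : ℝ) := by
      exact_mod_cast congrArg (Nat.cast : ℕ → ℝ) (cnt_conv f g x)
    have hsum : ∑ b : B, (1 / N) • ((cnt f (x - g b) : ℝ) / M) = (cnt h x : ℝ) / (M * N) := by
      rw [hc]
      rw [show ∑ b : B, (1 / N) • ((cnt f (x - g b) : ℝ) / M)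
          = ∑ b : B, (cnt f (x - g b) : ℝ) * (1 / (M * N)) from
        Finset.sum_congr rfl fun b _ => by simp [smul_eq_mul]; ring]
      rw [← Finset.sum_mul]
      ring
    have hj := Real.convexOn_mul_log.map_sum_le (t := Finset.univ)
      (w := fun _ : B => 1 / N) (p := fun b => (cnt f (x - g b) : ℝ) / M)
      (fun b _ => by positivity)
      (by simp [Finset.sum_const, Finset.card_univ, hN])
      (fun b _ => Set.mem_Ici.mpr (by positivity))
    rw [hsum] at hj
    simpa [entPhi, smul_eq_mul] using hj
  have main : ∑ x ∈ S, entPhi ((cnt h x : ℝ) / (M * N)) ≤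
      ∑ x ∈ S, ∑ b : B, (1 / N) * entPhi ((cnt f (x - g b) : ℝ) / M) :=
    Finset.sum_le_sum key
  -- per-b shift identity
  have shift : ∀ b : B, ∑ x ∈ S, entPhi ((cnt f (x - g b) : ℝ) / M) = E := by
    intro b
    have hinj : Function.Injective (fun x : ℝ => x - g b) := fun u v huv => by
      simpa using congrArg (fun t => t + g b) huv
    have h1 : ∑ x ∈ S, entPhi ((cnt f (x - g b) : ℝ) / M)
        = ∑ y ∈ S.image (fun x => x - g b), entPhi ((cnt f y : ℝ) / M) :=
      (Finset.sum_image (s := S) (f := fun y => entPhi ((cnt f y : ℝ) / M))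
        (g := fun x => x - g b) fun u _ v _ huv => hinj huv).symm
    rw [h1, hE]
    refine (Finset.sum_subset ?_ ?_).symm
    · intro y hy
      rcases Finset.mem_image.mp hy with ⟨a, -, ha⟩
      refine Finset.mem_image.mpr ⟨y + g b, ?_, by ring⟩
      exact Finset.mem_image.mpr ⟨(a, b), Finset.mem_univ _, by simp [hh, ha]⟩
    · intro y _ hy
      have : cnt f y = 0 := by
        rw [cnt, Finset.card_eq_zero]
        refine Finset.filter_eq_empty_iff.mpr fun a _ ha => ?_
        exact hy (Finset.mem_image.mpr ⟨a, Finset.mem_univ _, ha⟩)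
      simp [this]
  have main2 : ∑ x ∈ S, entPhi ((cnt h x : ℝ) / (M * N)) ≤ E := by
    refine main.trans ?_
    rw [Finset.sum_comm]
    have : ∀ b : B, ∑ x ∈ S, (1 / N) * entPhi ((cnt f (x - g b) : ℝ) / M)
        = (1 / N) * E := by
      intro b; rw [← Finset.mul_sum, shift b]
    rw [Finset.sum_congr rfl fun b _ => this b, Finset.sum_const, Finset.card_univ,
      nsmul_eq_mul, ← hN]
    rw [show N * ((1 / N) * E) = E by field_simp]
  have hcard : (Fintype.card (A × B) : ℝ) = M * N := by
    rw [Fintype.card_prod]; push_cast [hM, hN]; ring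
  unfold ent
  rw [hcard]
  simpa [hE, hS, hh] using neg_le_neg main2

lemma Hn_eq_ent (γ : ℝ) (m : ℕ) : Hn γ m = ent (wordVal γ (n := m)) := by
  unfold Hn ent Dn pn cnt entPhi
  have : (Fintype.card (Fin m → Bool) : ℝ) = 2 ^ m := by
    simp [Fintype.card_fun]
  rw [this]

lemma key_ineq (β : ℝ) (k n : ℕ) (hk : 0 < k) : Hn (β ^ k) n ≤ Hn β (k * n) := by
  classical
  set lastr : Fin k := ⟨k - 1, Nat.sub_lt hk Nat.one_pos⟩ with hlastr
  set P : Fin n × Fin k → Prop := fun p => p.2 = lastr with hP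
  let E' : Fin n × Fin k ≃ Fin (k * n) := finProdFinEquiv.trans (finCongr (mul_comm n k))
  let eW : (Fin n × Fin k → Bool) ≃ (Fin (k * n) → Bool) := Equiv.arrowCongr E' (Equiv.refl Bool)
  let eP := Equiv.piEquivPiSubtypeProd P (fun _ => Bool)
  let eA : Fin n ≃ {p : Fin n × Fin k // P p} :=
    { toFun := fun q => ⟨(q, lastr), rfl⟩
      invFun := fun i => i.1.1
      left_inv := fun q => rfl
      right_inv := fun i => by
        rcases i with ⟨⟨q, r⟩, hr⟩
        simp only [hP] at hr
        subst hr
        rfl }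
  set F : ({p : Fin n × Fin k // P p} → Bool) → ℝ :=
    fun a => wordVal (β ^ k) (fun q => a (eA q)) with hF
  set G : ({p : Fin n × Fin k // ¬P p} → Bool) → ℝ :=
    fun c => ∑ i : {p : Fin n × Fin k // ¬P p},
      if c i then (1 / β) ^ ((i.1.2 : ℕ) + k * (i.1.1 : ℕ) + 1) else 0 with hG
  have hdecomp : ∀ b : Fin n × Fin k → Bool,
      wordVal β (eW b) = F (eP b).1 + G (eP b).2 := by
    intro b
    have h1 : wordVal β (eW b)
        = ∑ p : Fin n × Fin k, if b p then (1 / β) ^ ((p.2 : ℕ) + k * (p.1 : ℕ) + 1) else 0 := by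
      unfold wordVal
      rw [← Equiv.sum_comp E'
        (fun i : Fin (k * n) => if (eW b) i then (1 / β) ^ ((i : ℕ) + 1) else 0)]
      refine Finset.sum_congr rfl fun p _ => ?_
      have hb : (eW b) (E' p) = b p := by simp [eW]
      have hv : ((E' p : Fin (k * n)) : ℕ) = (p.2 : ℕ) + k * (p.1 : ℕ) := by
        simp [E', finProdFinEquiv]
      rw [hb, hv]
    rw [h1, ← Finset.sum_filter_add_sum_filter_not Finset.univ P]
    congr 1
    · rw [Finset.sum_subtype (p := P) (Finset.univ.filter P) (fun x => by simp)
        (fun p => if b p then (1 / β) ^ ((p.2 : ℕ) + k * (p.1 : ℕ) + 1) else 0)]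
      rw [← Equiv.sum_comp eA (fun i : {p : Fin n × Fin k // P p} =>
        if b i.1 then (1 / β) ^ ((i.1.2 : ℕ) + k * (i.1.1 : ℕ) + 1) else 0)]
      rw [hF]
      unfold wordVal
      refine Finset.sum_congr rfl fun q _ => ?_
      have hexp : ((lastr : ℕ) + k * (q : ℕ) + 1) = k * ((q : ℕ) + 1) := by
        show k - 1 + k * (q : ℕ) + 1 = k * ((q : ℕ) + 1)
        cases k with
        | zero => omega
        | succ m => ring_nf; omega
      have hpow : (1 / β) ^ ((lastr : ℕ) + k * (q : ℕ) + 1) = (1 / β ^ k) ^ ((q : ℕ) + 1) := by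
        rw [hexp, pow_mul, one_div_pow]
      rw [show ((eA q).1.2 : ℕ) + k * ((eA q).1.1 : ℕ) + 1 = (lastr : ℕ) + k * (q : ℕ) + 1
        from rfl, hpow]
      rfl
    · rw [Finset.sum_subtype (p := fun p => ¬P p) (Finset.univ.filter fun p => ¬P p) (fun x => by simp)
        (fun p => if b p then (1 / β) ^ ((p.2 : ℕ) + k * (p.1 : ℕ) + 1) else 0)]
      rfl
  have step1 : Hn β (k * n) = ent (fun p : ({p : Fin n × Fin k // P p} → Bool) ×
      ({p : Fin n × Fin k // ¬P p} → Bool) => F p.1 + G p.2) := by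
    rw [Hn_eq_ent, ← ent_comp_equiv eW, ← ent_comp_equiv eP.symm]
    congr 1
    funext p
    show wordVal β (eW (eP.symm p)) = F p.1 + G p.2
    rw [hdecomp (eP.symm p), Equiv.apply_symm_apply]
  have step2 : ent F = Hn (β ^ k) n := by
    rw [Hn_eq_ent]
    have : F = (wordVal (β ^ k) (n := n)) ∘ (Equiv.arrowCongr eA (Equiv.refl Bool)).symm := by
      funext a
      rfl
    rw [this, ent_comp_equiv]
  rw [step1, ← step2]
  exact ent_le_ent_add F G

theorem garsia_entropy_pow_le (β : ℝ) (hβ1 : 1 < β) (hβ2 : β < 2) (k : ℕ) (hk : 2 ≤ k) :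
    (∀ n : ℕ, Hn (β ^ k) n ≤ Hn β (k * n)) ∧
    (∀ Hβ Hβk : ℝ,
      Filter.Tendsto (fun n : ℕ => Hn β n / (n * Real.log β)) Filter.atTop (nhds Hβ) →
      Filter.Tendsto (fun n : ℕ => Hn (β ^ k) n / (n * Real.log (β ^ k)))
        Filter.atTop (nhds Hβk) →
      Hβk ≤ Hβ) := by
  have hk0 : 0 < k := by omega
  refine ⟨fun n => key_ineq β k n hk0, ?_⟩
  intro Hβ Hβk hβ hβk
  have hmul : Filter.Tendsto (fun n : ℕ => k * n) Filter.atTop Filter.atTop :=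
    Filter.tendsto_atTop_mono (fun n => Nat.le_mul_of_pos_left n hk0) Filter.tendsto_id
  have hcomp : Filter.Tendsto
      (fun n : ℕ => Hn β (k * n) / (((k * n : ℕ) : ℝ) * Real.log β))
      Filter.atTop (nhds Hβ) := hβ.comp hmul
  refine le_of_tendsto_of_tendsto hβk hcomp ?_
  filter_upwards [Filter.eventually_ge_atTop 1] with n hn
  have hden : ((n : ℝ) * Real.log (β ^ k)) = ((k * n : ℕ) : ℝ) * Real.log β := by
    rw [Real.log_pow]; push_cast; ring
  have hpos : 0 < ((k * n : ℕ) : ℝ) * Real.log β := by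
    have hlog : 0 < Real.log β := Real.log_pos hβ1
    have : 0 < (k * n : ℕ) := by positivity
    positivity
  rw [hden]
  gcongr
  exact key_ineq β k n hk0
end

section
/- Let k ≥ 2 and β ∈ (1,2). Assume for every prime p dividing k there is no α ∈ ℚ(β) with β = α^p. Then Garsia's entropy satisfies H_{β^{1/k}} ≥ 1. -/
open scoped Classical

open Polynomial

lemma wordVal_succ (β : ℝ) {n : ℕ} (a : Fin (n+1) → Bool) :
    wordVal β a = (if a 0 then 1/β else 0) + (1/β) * wordVal β (fun i : Fin n => a i.succ) := by
  rw [wordVal, Fin.sum_univ_succ, wordVal, Finset.mul_sum]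
  simp [pow_succ, mul_comm, mul_ite]

lemma wordVal_nonneg {β : ℝ} (hβ : 0 < β) {n : ℕ} (a : Fin n → Bool) :
    0 ≤ wordVal β a := by
  apply Finset.sum_nonneg
  intro i _
  split
  · positivity
  · exact le_rfl

lemma wordVal_lt_one {γ : ℝ} (hγ : 2 < γ) {n : ℕ} (a : Fin n → Bool) :
    wordVal γ a < 1 := by
  have h0 : (0:ℝ) < γ := by linarith
  set r : ℝ := 1/γ with hr
  have hr0 : 0 ≤ r := by positivity
  have hr2 : r < 1/2 := by rw [hr, div_lt_div_iff₀ h0 two_pos]; linarith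
  have hr1 : r < 1 := by linarith
  have hb : wordVal γ a ≤ ∑ i : Fin n, r ^ ((i:ℕ)+1) := by
    apply Finset.sum_le_sum
    intro i _
    split
    · exact le_rfl
    · positivity
  have hgeo : ∑ i : Fin n, r ^ ((i:ℕ)+1) = r * ∑ i ∈ Finset.range n, r^i := by
    rw [Finset.mul_sum, Fin.sum_univ_eq_sum_range (fun i => r^(i+1))]
    apply Finset.sum_congr rfl
    intro i _
    rw [pow_succ]; ring
  set s : ℝ := ∑ i ∈ Finset.range n, r^i with hs
  have hkey : s * (1 - r) = 1 - r^n := by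
    have h := geom_sum_mul r n
    linear_combination -h
  have hrn : 0 ≤ r^n := pow_nonneg hr0 n
  have hspos : 0 ≤ s := Finset.sum_nonneg fun i _ => pow_nonneg hr0 i
  have : wordVal γ a ≤ r * s := by rw [hgeo] at hb; exact hb
  have h1r : 0 < 1 - r := by linarith
  -- r * s ≤ r/(1-r) < 1
  have hsle : s ≤ 1/(1-r) := by
    rw [le_div_iff₀ h1r]
    linarith
  have : wordVal γ a ≤ r * (1/(1-r)) :=
    le_trans this (mul_le_mul_of_nonneg_left hsle hr0)
  have hlast : r * (1/(1-r)) < 1 := by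
    rw [mul_one_div, div_lt_one h1r]
    linarith
  linarith

lemma wordVal_injective {γ : ℝ} (hγ : 2 < γ) {n : ℕ} :
    Function.Injective fun a : Fin n → Bool => wordVal γ a := by
  induction n with
  | zero => intro a b _; funext i; exact absurd i.2 (by omega)
  | succ n ih =>
    intro a b hab
    simp only at hab
    rw [wordVal_succ, wordVal_succ] at hab
    have h0 : (0:ℝ) < γ := by linarith
    have hγ0 : (0:ℝ) < 1/γ := by positivity
    have ha' := wordVal_nonneg h0 (fun i : Fin n => a i.succ)
    have hb' := wordVal_nonneg h0 (fun i : Fin n => b i.succ)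
    have ha1 := wordVal_lt_one hγ (fun i : Fin n => a i.succ)
    have hb1 := wordVal_lt_one hγ (fun i : Fin n => b i.succ)
    have hg0' : (0:ℝ) < γ⁻¹ := by positivity
    have hhead : a 0 = b 0 := by
      by_contra hne
      rcases Bool.eq_false_or_eq_true (a 0) with h1 | h1 <;>
        rcases Bool.eq_false_or_eq_true (b 0) with h2 | h2 <;>
          simp [h1, h2] at hab hne <;>
        nlinarith [mul_lt_mul_of_pos_left hb1 hg0', mul_lt_mul_of_pos_left ha1 hg0',
          mul_nonneg (le_of_lt hg0') ha', mul_nonneg (le_of_lt hg0') hb']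
    rw [hhead] at hab
    have htail : wordVal γ (fun i : Fin n => a i.succ) = wordVal γ (fun i : Fin n => b i.succ) := by
      have := add_left_cancel hab
      exact mul_left_cancel₀ (ne_of_gt hγ0) this
    have := ih htail
    funext i
    refine Fin.cases ?_ ?_ i
    · exact hhead
    · intro j; exact congrFun this j

section Key

variable (β β₀ : ℝ) (k p j K M : ℕ)

-- index of the (R,Q) good position
def idxN (R Q : ℕ) : ℕ := j * (p * K * Q + R + 1) - 1

lemma idxN_lt (hj : 1 ≤ j) (hK : 1 ≤ K) (hp : 1 ≤ p) {R Q : ℕ} (hR : R < p) (hQ : Q < M) :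
    idxN p j K R Q < j * p * K * M := by
  have h1 : p * K * Q + R + 1 ≤ p * K * M := by
    have h2 : Q + 1 ≤ M := hQ
    have h3 : R + 1 ≤ p * K := le_trans hR (Nat.le_mul_of_pos_right p hK)
    calc p * K * Q + R + 1 = p * K * Q + (R + 1) := by ring
      _ ≤ p * K * Q + p * K := by omega
      _ = p * K * (Q + 1) := by ring
      _ ≤ p * K * M := Nat.mul_le_mul_left _ h2
  have h4 : j * (p * K * Q + R + 1) ≤ j * (p * K * M) := Nat.mul_le_mul_left _ h1
  have h5 : 1 ≤ j * (p * K * Q + R + 1) := Nat.one_le_iff_ne_zero.mpr (by positivity)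
  unfold idxN
  have : j * (p * K * M) = j * p * K * M := by ring
  omega

lemma idxN_inj (hj : 1 ≤ j) (hK : 1 ≤ K) {R Q R' Q' : ℕ} (hR : R < p) (hR' : R' < p)
    (h : idxN p j K R Q = idxN p j K R' Q') : R = R' ∧ Q = Q' := by
  unfold idxN at h
  have h5 : 1 ≤ j * (p * K * Q + R + 1) := Nat.one_le_iff_ne_zero.mpr (by positivity)
  have h5' : 1 ≤ j * (p * K * Q' + R' + 1) := Nat.one_le_iff_ne_zero.mpr (by positivity)
  have heq : j * (p * K * Q + R + 1) = j * (p * K * Q' + R' + 1) := by omega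
  have heq2 : p * K * Q + R = p * K * Q' + R' :=
    by have := Nat.eq_of_mul_eq_mul_left (by omega : 0 < j) heq; omega
  have hRpK : R < p * K := lt_of_lt_of_le hR (Nat.le_mul_of_pos_right p hK)
  have hRpK' : R' < p * K := lt_of_lt_of_le hR' (Nat.le_mul_of_pos_right p hK)
  have hmod : R = R' := by
    have a1 : (p * K * Q + R) % (p * K) = R := by
      rw [Nat.mul_add_mod]  -- ?
      exact Nat.mod_eq_of_lt hRpK
    have a2 : (p * K * Q' + R') % (p * K) = R' := by
      rw [Nat.mul_add_mod]
      exact Nat.mod_eq_of_lt hRpK'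
    rw [← a1, ← a2, heq2]
  constructor
  · exact hmod
  · subst hmod
    have hpK : 0 < p * K := Nat.mul_pos (by omega) hK
    have h6 : p * K * Q = p * K * Q' := by omega
    exact Nat.eq_of_mul_eq_mul_left hpK h6
end Key

lemma wordVal_mem {F : IntermediateField ℚ ℝ} {γ : ℝ} (hγ : γ ∈ F) {M : ℕ} (u : Fin M → Bool) :
    wordVal γ u ∈ F := by
  apply sum_mem
  intro i _
  split
  · exact pow_mem (div_mem (one_mem F) hγ) _
  · exact zero_mem F

lemma pow_helper {x : ℝ} (hx : x ≠ 0) {A B C : ℕ} (h : B + C = A) :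
    (1/x) ^ A * x ^ B = (1/x) ^ C := by
  subst h
  rw [pow_add, mul_comm ((1/x)^B) ((1/x)^C), mul_assoc, ← mul_pow, one_div,
    inv_mul_cancel₀ hx, one_pow, mul_one]

lemma pow_idx {β β₀ : ℝ} {k p j K : ℕ} (hβ₀ : 0 < β₀) (hβ₀k : β₀ ^ k = β) (hjp : j * p = k)
    (hj : 1 ≤ j) (hK : 1 ≤ K) {R Q : ℕ} (hR : R < p) :
    (1/β₀) ^ (idxN p j K R Q + 1)
      = (β₀^j) ^ (p - 1 - R) * β ^ (K - 1) * (1 / β ^ K) ^ (Q + 1) := by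
  obtain ⟨K', rfl⟩ : ∃ K', K = K' + 1 := ⟨K - 1, by omega⟩
  obtain ⟨d, rfl⟩ : ∃ d, p = R + 1 + d := ⟨p - 1 - R, by omega⟩
  set p := R + 1 + d with hpdef
  set K := K' + 1 with hKdef
  have hη0 : (0:ℝ) < β₀ ^ j := by positivity
  have hηne : (β₀:ℝ) ^ j ≠ 0 := ne_of_gt hη0
  set η : ℝ := β₀ ^ j with hηdef
  have hηp : η ^ p = β := by rw [hηdef, ← pow_mul, hjp, hβ₀k]
  have h5 : 1 ≤ j * (p * K * Q + R + 1) :=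
    Nat.one_le_iff_ne_zero.mpr (by positivity)
  have hidx : idxN p j K R Q + 1 = j * (p * K * Q + R + 1) := by
    unfold idxN; omega
  have hs1 : p - 1 - R = d := by omega
  have hs2 : K - 1 = K' := by omega
  rw [hidx, pow_mul, div_pow, one_pow, ← hηdef, hs1, hs2]
  -- now: (1/η) ^ (p*K*Q+R+1) = η^d * β^K' * (1/β^K)^(Q+1)
  have hb1 : β ^ K' = η ^ (p * K') := by rw [pow_mul, hηp]
  have hb2 : (1 / β ^ K) ^ (Q+1) = (1/η) ^ (p * K * (Q+1)) := by
    have h' : η ^ (p*K) = β ^ K := by rw [pow_mul, hηp]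
    rw [pow_mul (1/η) (p*K) (Q+1)]
    congr 1
    rw [← h', div_pow, one_pow]
  rw [hb1, hb2, mul_assoc, ← pow_add, mul_comm (η ^ (d + p * K'))]
  exact (pow_helper hηne (by simp only [hpdef, hKdef]; ring)).symm


lemma eta_powers_li (β : ℝ) (k : ℕ) (hk : 2 ≤ k)
    (hp : ∀ p : ℕ, p.Prime → p ∣ k →
      ¬∃ α : IntermediateField.adjoin ℚ {β}, β = (α : ℝ) ^ p)
    (η : ℝ) (hηp : η ^ k.minFac = β) :
    ∀ w : Fin k.minFac → IntermediateField.adjoin ℚ {β},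
      (∑ r : Fin k.minFac, (w r : ℝ) * η ^ (r : ℕ)) = 0 → ∀ r, w r = 0 := by
  set F := IntermediateField.adjoin ℚ {β} with hF
  set p := k.minFac with hpdef
  have hkne : k ≠ 1 := by omega
  have hprime : p.Prime := Nat.minFac_prime hkne
  have hβF : β ∈ F := IntermediateField.mem_adjoin_simple_self ℚ β
  set βF : F := ⟨β, hβF⟩ with hβFdef
  have hnotpow : ∀ b : F, b ^ p ≠ βF := by
    intro b hb
    refine hp p hprime (Nat.minFac_dvd k) ⟨b, ?_⟩
    have : ((b ^ p : F) : ℝ) = (βF : ℝ) := by rw [hb]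
    push_cast at this
    exact this.symm
  have irr : Irreducible (X ^ p - C βF) :=
    X_pow_sub_C_irreducible_of_prime hprime hnotpow
  have haev : Polynomial.aeval η (X ^ p - C βF) = 0 := by
    rw [map_sub, aeval_X_pow, aeval_C]
    have : (algebraMap F ℝ) βF = β := rfl
    rw [this, hηp, sub_self]
  have hmin : minpoly F η = X ^ p - C βF :=
    (minpoly.eq_of_irreducible_of_monic irr haev (monic_X_pow_sub_C βF hprime.ne_zero)).symm
  have hdeg : (minpoly F η).natDegree = p := by
    rw [hmin, natDegree_X_pow_sub_C]
  have hli := linearIndependent_pow (K := F) (S := ℝ) η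
  rw [hdeg] at hli
  intro w hw r
  have := Fintype.linearIndependent_iff.mp hli w ?_ r
  · exact this
  · rw [← hw]
    apply Finset.sum_congr rfl
    intro i _
    rw [Algebra.smul_def]
    rfl

lemma key_inj {β β₀ : ℝ} {k p j K M : ℕ}
    (hβ₀ : 0 < β₀) (hβpos : 0 < β) (hβ₀k : β₀ ^ k = β)
    (hjp : j * p = k) (hj : 1 ≤ j) (hK : 1 ≤ K) (hp1 : 1 ≤ p)
    (hγ2 : 2 < β ^ K)
    (hLI : ∀ w : Fin p → (IntermediateField.adjoin ℚ {β}),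
      (∑ r : Fin p, (w r : ℝ) * (β₀ ^ j) ^ (r : ℕ)) = 0 → ∀ r, w r = 0)
    (a b : Fin (j*p*K*M) → Bool)
    (hoff : ∀ i : Fin (j*p*K*M),
      (∀ (R : Fin p) (Q : Fin M), (i:ℕ) ≠ idxN p j K R Q) → a i = b i)
    (hval : wordVal β₀ a = wordVal β₀ b) : a = b := by
  have hβmem : β ∈ IntermediateField.adjoin ℚ {β} :=
    IntermediateField.mem_adjoin_simple_self ℚ β
  have hidxlt : ∀ (R : Fin p) (Q : Fin M), idxN p j K (R:ℕ) (Q:ℕ) < j*p*K*M :=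
    fun R Q => idxN_lt p j K M hj hK hp1 R.2 Q.2
  set idxF : Fin p → Fin M → Fin (j*p*K*M) :=
    fun R Q => ⟨idxN p j K R Q, hidxlt R Q⟩ with hidxF
  set c : Fin (j*p*K*M) → ℝ :=
    fun i => (if a i then (1:ℝ) else 0) - (if b i then (1:ℝ) else 0) with hc
  set f : Fin (j*p*K*M) → ℝ := fun i => c i * (1/β₀) ^ ((i:ℕ)+1) with hf
  have h1 : (∑ i, f i) = 0 := by
    have he : (∑ i, f i) = wordVal β₀ a - wordVal β₀ b := by
      rw [wordVal, wordVal, ← Finset.sum_sub_distrib]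
      apply Finset.sum_congr rfl
      intro i _
      simp only [hf, hc, sub_mul, ite_mul, one_mul, zero_mul]
    rw [he, hval, sub_self]
  set G : Finset (Fin (j*p*K*M)) :=
    Finset.image (fun z : Fin p × Fin M => idxF z.1 z.2) Finset.univ with hG
  have h2 : (∑ i ∈ G, f i) = 0 := by
    rw [← h1]
    apply Finset.sum_subset (Finset.subset_univ G)
    intro i _ hiG
    have hab : a i = b i := by
      apply hoff
      intro R Q hiRQ
      apply hiG
      rw [hG]
      exact Finset.mem_image.2 ⟨(R,Q), Finset.mem_univ _, Fin.ext hiRQ.symm⟩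
    simp only [hf, hc, hab, sub_self, zero_mul]
  have h3 : (∑ i ∈ G, f i) = ∑ z : Fin p × Fin M, f (idxF z.1 z.2) := by
    rw [hG]
    apply Finset.sum_image
    intro z _ z' _ hzz
    have := idxN_inj p j K hj hK z.1.2 z'.1.2 (by exact congrArg Fin.val hzz)
    exact Prod.ext (Fin.ext this.1) (Fin.ext this.2)
  set E : Fin p → ℝ := fun R =>
    wordVal (β ^ K) (fun Q => a (idxF R Q)) - wordVal (β ^ K) (fun Q => b (idxF R Q)) with hE
  have h5 : ∀ R : Fin p, (∑ Q : Fin M, f (idxF R Q))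
      = (β₀^j) ^ (p - 1 - (R:ℕ)) * β ^ (K - 1) * E R := by
    intro R
    have : ∀ Q : Fin M, f (idxF R Q)
        = (β₀^j) ^ (p - 1 - (R:ℕ)) * β ^ (K - 1)
          * (c (idxF R Q) * (1 / β ^ K) ^ ((Q:ℕ) + 1)) := by
      intro Q
      simp only [hf]
      rw [pow_idx hβ₀ hβ₀k hjp hj hK R.2]
      ring
    rw [Finset.sum_congr rfl (fun Q _ => this Q), ← Finset.mul_sum]
    congr 1
    rw [hE]
    simp only [hc, wordVal, ← Finset.sum_sub_distrib, sub_mul, ite_mul, one_mul, zero_mul]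
  have h6 : (∑ R : Fin p, (β₀^j) ^ (p - 1 - (R:ℕ)) * E R) = 0 := by
    have hb : (0:ℝ) < β ^ (K-1) := by positivity
    have h4 : (∑ z : Fin p × Fin M, f (idxF z.1 z.2)) = 0 := by rw [← h3, h2]
    rw [Fintype.sum_prod_type] at h4
    have : (∑ R : Fin p, ∑ Q : Fin M, f (idxF R Q))
        = β ^ (K-1) * ∑ R : Fin p, (β₀^j) ^ (p - 1 - (R:ℕ)) * E R := by
      rw [Finset.mul_sum]
      apply Finset.sum_congr rfl
      intro R _
      rw [h5 R]; ring
    rw [this] at h4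
    exact (mul_eq_zero.mp h4).resolve_left (ne_of_gt hb)
  -- linear independence
  set w : Fin p → (IntermediateField.adjoin ℚ {β}) := fun r =>
    ⟨E (Fin.rev r), sub_mem (wordVal_mem (pow_mem hβmem K) _) (wordVal_mem (pow_mem hβmem K) _)⟩
    with hw
  have hwsum : (∑ r : Fin p, (w r : ℝ) * (β₀ ^ j) ^ (r : ℕ)) = 0 := by
    rw [← h6]
    apply Fintype.sum_equiv (Fin.revPerm)
    intro x
    have hx : p - 1 - ((Fin.revPerm x : Fin p) : ℕ) = (x : ℕ) := by
      have h1 := (Fin.revPerm x : Fin p).2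
      have h2 : ((Fin.revPerm x : Fin p) : ℕ) = p - ((x:ℕ) + 1) := Fin.val_rev x
      have := x.2
      omega
    rw [hx]
    simp only [hw, Fin.revPerm_apply]
    ring
  have hE0 : ∀ R : Fin p, E R = 0 := by
    intro R
    have := hLI w hwsum (Fin.rev R)
    have h' : w (Fin.rev R) = ⟨E (Fin.rev (Fin.rev R)), _⟩ := rfl
    rw [Fin.rev_rev] at h'
    have : (w (Fin.rev R) : ℝ) = 0 := by rw [this]; rfl
    rw [h'] at this
    exact this
  have hsub : ∀ R : Fin p, (fun Q => a (idxF R Q)) = (fun Q => b (idxF R Q)) := by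
    intro R
    apply wordVal_injective hγ2
    have := hE0 R
    rw [hE] at this
    simpa [sub_eq_zero] using this
  funext i
  by_cases hex : ∃ (R : Fin p) (Q : Fin M), (i:ℕ) = idxN p j K R Q
  · obtain ⟨R, Q, hRQ⟩ := hex
    have : i = idxF R Q := Fin.ext hRQ
    rw [this]
    exact congrFun (hsub R) Q
  · push_neg at hex
    exact hoff i hex

lemma sum_pn (β : ℝ) (n : ℕ) : (∑ x ∈ Dn β n, pn β n x) = 2 ^ n := by
  have h := Finset.card_eq_sum_card_image (fun a : Fin n → Bool => wordVal β a)
    (Finset.univ : Finset (Fin n → Bool))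
  rw [Finset.card_univ] at h
  have hcard : Fintype.card (Fin n → Bool) = 2 ^ n := by
    simp [Fintype.card_fun]
  rw [hcard] at h
  rw [Dn]
  rw [h]
  rfl

lemma pn_pos_s13 {β : ℝ} {n : ℕ} {x : ℝ} (hx : x ∈ Dn β n) : 0 < pn β n x := by
  rw [Dn, Finset.mem_image] at hx
  obtain ⟨a, _, ha⟩ := hx
  rw [pn, Finset.card_pos]
  exact ⟨a, by simp [ha]⟩

lemma Hn_ge_of_pn_le {β : ℝ} {n t : ℕ} (ht : t ≤ n)
    (hb : ∀ x ∈ Dn β n, pn β n x ≤ 2 ^ (n - t)) :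
    (t : ℝ) * Real.log 2 ≤ Hn β n := by
  have h2n : (0:ℝ) < 2 ^ n := by positivity
  have hq1 : (∑ x ∈ Dn β n, ((pn β n x : ℝ) / 2 ^ n)) = 1 := by
    rw [← Finset.sum_div]
    rw [div_eq_one_iff_eq (ne_of_gt h2n)]
    rw [← Nat.cast_sum, sum_pn β n]
    norm_num
  rw [Hn, ← Finset.sum_neg_distrib]
  have key : ∀ x ∈ Dn β n,
      ((pn β n x : ℝ) / 2 ^ n) * ((t:ℝ) * Real.log 2)
        ≤ -(((pn β n x : ℝ) / 2 ^ n) * Real.log ((pn β n x : ℝ) / 2 ^ n)) := by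
    intro x hx
    set q : ℝ := (pn β n x : ℝ) / 2 ^ n with hqdef
    have hq0 : 0 < q := by
      apply div_pos _ h2n
      exact_mod_cast pn_pos_s13 hx
    have hqle : q ≤ (2:ℝ)⁻¹ ^ t := by
      rw [hqdef, div_le_iff₀ h2n]
      have h1 : ((pn β n x : ℝ)) ≤ (2:ℝ) ^ (n - t) := by
        exact_mod_cast hb x hx
      have h2 : (2:ℝ)⁻¹ ^ t * 2 ^ n = 2 ^ (n - t) := by
        rw [inv_pow, inv_mul_eq_div, div_eq_iff (show ((2:ℝ)^t) ≠ 0 by positivity), ← pow_add]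
        congr 1
        omega
      rw [h2]; exact h1
    have hlog : (t:ℝ) * Real.log 2 ≤ Real.log q⁻¹ := by
      have h3 : (2:ℝ) ^ t ≤ q⁻¹ := by
        rw [← inv_inv ((2:ℝ) ^ t)]
        apply inv_anti₀ hq0
        rw [← inv_pow]; exact hqle
      calc (t:ℝ) * Real.log 2 = Real.log (2 ^ t) := by rw [Real.log_pow]
        _ ≤ Real.log q⁻¹ := Real.log_le_log (by positivity) h3
    calc q * ((t:ℝ) * Real.log 2) ≤ q * Real.log q⁻¹ :=
          mul_le_mul_of_nonneg_left hlog (le_of_lt hq0)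
      _ = -(q * Real.log q) := by rw [Real.log_inv]; ring
  calc (t : ℝ) * Real.log 2 = ∑ x ∈ Dn β n, ((pn β n x : ℝ) / 2 ^ n) * ((t:ℝ) * Real.log 2) := by
        rw [← Finset.sum_mul, hq1, one_mul]
    _ ≤ _ := Finset.sum_le_sum key

lemma pn_le_s13 {β β₀ : ℝ} {k p j K M : ℕ}
    (hβ₀ : 0 < β₀) (hβpos : 0 < β) (hβ₀k : β₀ ^ k = β)
    (hjp : j * p = k) (hj : 1 ≤ j) (hK : 1 ≤ K) (hp1 : 1 ≤ p)
    (hγ2 : 2 < β ^ K)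
    (hLI : ∀ w : Fin p → (IntermediateField.adjoin ℚ {β}),
      (∑ r : Fin p, (w r : ℝ) * (β₀ ^ j) ^ (r : ℕ)) = 0 → ∀ r, w r = 0)
    (x : ℝ) : pn β₀ (j*p*K*M) x ≤ 2 ^ (j*p*K*M - p*M) := by
  set n := j*p*K*M with hn
  set Good : Fin n → Prop := fun i => ∃ (R : Fin p) (Q : Fin M), (i:ℕ) = idxN p j K R Q
    with hGood
  set Φ : (Fin n → Bool) → ({i : Fin n // ¬ Good i} → Bool) := fun a => fun i => a i.1 with hΦ
  rw [pn]
  have hcard := Finset.card_le_card_of_injOn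
    (s := Finset.univ.filter (fun a : Fin n → Bool => wordVal β₀ a = x))
    (t := (Finset.univ : Finset ({i : Fin n // ¬ Good i} → Bool))) Φ
    (fun a _ => Finset.mem_univ _) ?_
  · refine le_trans hcard ?_
    rw [Finset.card_univ]
    have h1 : Fintype.card ({i : Fin n // ¬ Good i} → Bool)
        = 2 ^ (Fintype.card {i : Fin n // ¬ Good i}) := by
      simp [Fintype.card_fun]
    rw [h1]
    apply Nat.pow_le_pow_right (by norm_num)
    have h2 : Fintype.card {i : Fin n // Good i} = p * M := by
      rw [Fintype.card_subtype]
      have himg : Finset.univ.filter Good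
          = Finset.image (fun z : Fin p × Fin M =>
              (⟨idxN p j K z.1 z.2, idxN_lt p j K M hj hK hp1 z.1.2 z.2.2⟩ : Fin n))
            Finset.univ := by
        ext i
        rw [Finset.mem_filter, Finset.mem_image]
        constructor
        · rintro ⟨-, R, Q, hRQ⟩
          exact ⟨(R, Q), Finset.mem_univ _, Fin.ext hRQ.symm⟩
        · rintro ⟨z, -, hz⟩
          exact ⟨Finset.mem_univ _, z.1, z.2, by rw [← hz]⟩
      rw [himg, Finset.card_image_of_injective _ ?_, Finset.card_univ,
        Fintype.card_prod, Fintype.card_fin, Fintype.card_fin]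
      intro z z' hzz
      have := idxN_inj p j K hj hK z.1.2 z'.1.2 (by exact congrArg Fin.val hzz)
      exact Prod.ext (Fin.ext this.1) (Fin.ext this.2)
    have h3 := Fintype.card_subtype_compl Good
    rw [h3, h2, Fintype.card_fin]
  · intro a ha b hb hab
    simp only [Finset.coe_filter, Set.mem_setOf_eq, Finset.mem_univ, true_and] at ha hb
    apply key_inj hβ₀ hβpos hβ₀k hjp hj hK hp1 hγ2 hLI a b ?_ (by rw [ha, hb])
    intro i hi
    have hni : ¬ Good i := by
      intro hGi
      obtain ⟨R, Q, hRQ⟩ := hGi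
      exact hi R Q hRQ
    exact congrFun hab ⟨i, hni⟩

theorem garsia_entropy_root_ge_one (β : ℝ) (hβ1 : 1 < β) (hβ2 : β < 2)
    (k : ℕ) (hk : 2 ≤ k)
    (hp : ∀ p : ℕ, p.Prime → p ∣ k →
      ¬∃ α : IntermediateField.adjoin ℚ {β}, β = (α : ℝ) ^ p)
    (β₀ : ℝ) (hβ₀pos : 0 < β₀) (hβ₀ : β₀ ^ k = β) :
    ∀ L : ℝ,
      Filter.Tendsto (fun n : ℕ => Hn β₀ n / (n * Real.log β₀))
        Filter.atTop (nhds L) → 1 ≤ L := by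
  intro L hL
  have hβpos : (0:ℝ) < β := by linarith
  set p := k.minFac with hpdef
  have hpprime : p.Prime := Nat.minFac_prime (by omega)
  have hp2 : 2 ≤ p := hpprime.two_le
  set j := k / p with hjdef
  have hjp : j * p = k := Nat.div_mul_cancel (Nat.minFac_dvd k)
  have hj : 1 ≤ j := by
    rcases Nat.eq_zero_or_pos j with h | h
    · rw [h, zero_mul] at hjp; omega
    · exact h
  have hp1 : 1 ≤ p := by omega
  -- β₀ > 1
  have hβ₀1 : 1 < β₀ := by
    by_contra h
    push_neg at h
    have : β₀ ^ k ≤ 1 := pow_le_one₀ (le_of_lt hβ₀pos) h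
    rw [hβ₀] at this; linarith
  -- K : minimal with 2 < β ^ K
  have hKex : ∃ m : ℕ, 2 < β ^ m := pow_unbounded_of_one_lt 2 hβ1
  set K := Nat.find hKex with hKdef
  have hK2 : 2 < β ^ K := Nat.find_spec hKex
  have hK1 : 1 ≤ K := by
    rcases Nat.eq_zero_or_pos K with h | h
    · rw [h] at hK2; norm_num at hK2
    · exact h
  have hβK4 : β ^ K ≤ 4 := by
    have hKm : ¬ (2 < β ^ (K - 1)) := Nat.find_min hKex (by omega)
    push_neg at hKm
    have h1 : β ^ K = β ^ (K-1) * β := by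
      rw [← pow_succ]
      congr 1
      omega
    have h2 : (0:ℝ) < β ^ (K-1) := by positivity
    rw [h1]
    nlinarith
  -- log facts
  have hlogβpos : 0 < Real.log β := Real.log_pos hβ1
  have hlogβ₀pos : 0 < Real.log β₀ := Real.log_pos hβ₀1
  have hklog : (k:ℝ) * Real.log β₀ = Real.log β := by
    rw [← Real.log_pow, hβ₀]
  have hKlog : (K:ℝ) * Real.log β ≤ 2 * Real.log 2 := by
    have := Real.log_le_log (by positivity : (0:ℝ) < β ^ K) hβK4
    rw [Real.log_pow] at this
    have h4 : Real.log 4 = 2 * Real.log 2 := by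
      rw [show (4:ℝ) = 2^2 by norm_num, Real.log_pow]
      norm_num
    rw [h4] at this
    exact this
  -- η and LI
  have hηp : (β₀ ^ j) ^ p = β := by rw [← pow_mul, hjp, hβ₀]
  have hLI := eta_powers_li β k hk hp (β₀ ^ j) hηp
  -- the subsequence
  set s : ℕ → ℕ := fun M => j * p * K * (M + 1) with hs
  have hsub : ∀ M : ℕ, 1 ≤ Hn β₀ (s M) / ((s M : ℝ) * Real.log β₀) := by
    intro M
    set n := s M with hn
    have hn' : n = j * p * K * (M+1) := rfl
    set t := p * (M + 1) with ht
    have htn : t ≤ n := by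
      rw [hn', ht]
      calc p * (M+1) ≤ (j * K) * (p * (M+1)) := Nat.le_mul_of_pos_left _ (by positivity)
        _ = j * p * K * (M+1) := by ring
    have hHn : (t : ℝ) * Real.log 2 ≤ Hn β₀ n := by
      apply Hn_ge_of_pn_le htn
      intro x _
      have := pn_le_s13 (M := M+1) hβ₀pos hβpos hβ₀ hjp hj hK1 hp1 hK2 hLI x
      rw [← hn', ← ht] at this
      exact this
    have hnpos : 0 < n := by
      rw [hn']
      positivity
    have hnlog : (n:ℝ) * Real.log β₀ = (K:ℝ) * (M+1) * Real.log β := by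
      have hkc : ((j:ℝ) * p) = (k:ℝ) := by exact_mod_cast congrArg Nat.cast hjp
      rw [hn']
      push_cast
      rw [show ((j:ℝ) * p * K * (M+1)) * Real.log β₀
          = ((j:ℝ) * p) * Real.log β₀ * (K * (M+1)) by ring, hkc, hklog]
      ring
    have hcomp : (n:ℝ) * Real.log β₀ ≤ (t:ℝ) * Real.log 2 := by
      rw [hnlog, ht]
      push_cast
      have h1 : (K:ℝ) * Real.log β * (M+1) ≤ 2 * Real.log 2 * (M+1) := by
        apply mul_le_mul_of_nonneg_right hKlog (by positivity)
      have h2 : 2 * Real.log 2 * (M+1) ≤ (p:ℝ) * Real.log 2 * (M+1) := by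
        have : (2:ℝ) ≤ (p:ℝ) := by exact_mod_cast hp2
        have hl2 : 0 < Real.log 2 := Real.log_pos (by norm_num)
        apply mul_le_mul_of_nonneg_right _ (by positivity)
        nlinarith
      nlinarith
    rw [le_div_iff₀ (by positivity), one_mul]
    calc (n:ℝ) * Real.log β₀ ≤ (t:ℝ) * Real.log 2 := hcomp
      _ ≤ Hn β₀ n := hHn
  -- conclude
  have htend : Filter.Tendsto s Filter.atTop Filter.atTop := by
    apply Filter.tendsto_atTop_mono (f := fun M : ℕ => M)
    · intro M
      rw [hs]
      calc M ≤ M + 1 := by omega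
        _ ≤ j * p * K * (M+1) := Nat.le_mul_of_pos_left _ (by positivity)
    · exact Filter.tendsto_id
  exact ge_of_tendsto' (hL.comp htend) hsub
end

section
/- Let β ∈ (1,2) be a Pisot number and k ≥ 2 such that β^{1/k} is not a Pisot number. Setting α = β^{1/k}, there exists n dividing k such that α^n is Pisot and for every prime p dividing n, α^n is not a p-th power of any element of ℚ(α^n). -/
/-- A Pisot number: a real algebraic integer greater than 1 all of whose other
Galois conjugates (complex roots of its minimal polynomial over ℤ) have
absolute value strictly less than 1. -/
def IsPisot (x : ℝ) : Prop :=
  1 < x ∧ IsIntegral ℤ x ∧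
    ∀ y : ℂ, Polynomial.aeval y (minpoly ℤ x) = 0 → y ≠ (x : ℂ) → ‖y‖ < 1

open Polynomial in
lemma key (γ δ : ℝ) (p : ℕ) (hp : 2 ≤ p) (hγ : IsPisot γ)
    (hδ : δ ∈ IntermediateField.adjoin ℚ {γ}) (hδ1 : 1 < δ) (hpow : δ ^ p = γ) :
    IsPisot δ := by
  obtain ⟨hγ1, hγint, hγconj⟩ := hγ
  have hδint : IsIntegral ℤ δ := IsIntegral.of_pow (by omega) (hpow ▸ hγint)
  -- δ = f(γ) for some rational polynomial f
  have hγintQ : IsIntegral ℚ γ := hγint.tower_top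
  obtain ⟨f, hf⟩ : ∃ f : ℚ[X], aeval γ f = δ := by
    have h1 : δ ∈ (IntermediateField.adjoin ℚ {γ}).toSubalgebra := hδ
    rw [IntermediateField.adjoin_simple_toSubalgebra_of_isAlgebraic hγintQ.isAlgebraic,
      Algebra.adjoin_singleton_eq_range_aeval] at h1
    exact h1
  refine ⟨hδ1, hδint, ?_⟩
  intro y hy hyne
  have hy' : aeval y (minpoly ℚ δ) = 0 := by
    rw [minpoly.isIntegrallyClosed_eq_field_fractions' ℚ hδint, aeval_map_algebraMap]
    exact hy
  -- y^p is a root of minpoly ℚ γ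
  have hdvd : minpoly ℚ δ ∣ (minpoly ℚ γ).comp (X ^ p) := by
    refine minpoly.dvd ℚ δ ?_
    rw [aeval_comp]
    simp [hpow, minpoly.aeval]
  have hyp : aeval (y ^ p) (minpoly ℚ γ) = 0 := by
    obtain ⟨q, hq⟩ := hdvd
    have : aeval y ((minpoly ℚ γ).comp (X ^ p)) = 0 := by
      rw [hq, map_mul, hy', zero_mul]
    rwa [aeval_comp, map_pow, aeval_X] at this
  have hypZ : aeval (y ^ p) (minpoly ℤ γ) = 0 := by
    rw [minpoly.isIntegrallyClosed_eq_field_fractions' ℚ hγint, aeval_map_algebraMap] at hyp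
    exact hyp
  by_cases hcase : y ^ p = (γ : ℂ)
  · -- then y = δ, contradiction
    exfalso
    apply hyne
    set g : ℚ[X] := X - f.comp (X ^ p) with hg
    have hgδ : aeval δ g = 0 := by
      simp [hg, aeval_comp, hpow, hf]
    have hgne : g ≠ 0 := by
      intro h0
      have h1 : f.comp (X ^ p) = X := by
        have := sub_eq_zero.mp h0.symm.symm
        linear_combination (norm := ring_nf) -h0 + hg
      have := congrArg natDegree h1
      rw [natDegree_comp, natDegree_X_pow, natDegree_X] at this
      rcases Nat.eq_one_of_mul_eq_one_left this with hp1
      omega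
    have hdvd2 : minpoly ℚ δ ∣ g := minpoly.dvd ℚ δ hgδ
    have hyg : aeval y g = 0 := by
      obtain ⟨q, hq⟩ := hdvd2
      rw [hq, map_mul, hy', zero_mul]
    rw [hg, map_sub, aeval_X, aeval_comp, map_pow, aeval_X, sub_eq_zero] at hyg
    rw [hyg, hcase]
    rw [show ((γ : ℝ) : ℂ) = algebraMap ℝ ℂ γ from rfl, aeval_algebraMap_apply, hf]
    rfl
  · have habs := hγconj (y ^ p) hypZ hcase
    rw [norm_pow] at habs
    by_contra hge
    push_neg at hge
    have h1 : (1 : ℝ) ≤ ‖y‖ ^ p := one_le_pow₀ hge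
    linarith

theorem exists_pisot_power_not_pth_power (β : ℝ) (hβ1 : 1 < β) (hβ2 : β < 2)
    (hpisot : IsPisot β) (k : ℕ) (hk : 2 ≤ k)
    (α : ℝ) (hαpos : 0 < α) (hα : α ^ k = β) (hnot : ¬IsPisot α) :
    ∃ n : ℕ, n ∣ k ∧ IsPisot (α ^ n) ∧
      ∀ p : ℕ, p.Prime → p ∣ n →
        ¬∃ δ : IntermediateField.adjoin ℚ {α ^ n}, α ^ n = (δ : ℝ) ^ p := by
  classical
  have hex : ∃ n, n ∣ k ∧ IsPisot (α ^ n) := ⟨k, dvd_rfl, hα ▸ hpisot⟩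
  obtain ⟨hnk, hnpisot⟩ := Nat.find_spec hex
  set n := Nat.find hex with hn
  have hnpos : 0 < n := Nat.pos_of_ne_zero fun h0 => by
    rw [h0] at hnk
    have := Nat.eq_zero_of_zero_dvd hnk
    omega
  refine ⟨n, hnk, hnpisot, ?_⟩
  rintro p pp hpn ⟨δ, hδeq⟩
  have hγ1 : 1 < α ^ n := hnpisot.1
  have hγpos : (0:ℝ) < α ^ n := by linarith
  have hmem : |(δ : ℝ)| ∈ IntermediateField.adjoin ℚ {α ^ n} := by
    rcases abs_cases (δ : ℝ) with ⟨h, _⟩ | ⟨h, _⟩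
    · rw [h]; exact δ.2
    · rw [h]; exact neg_mem δ.2
  have habs_pow : |(δ : ℝ)| ^ p = α ^ n := by
    rw [← abs_pow, ← hδeq, abs_of_pos hγpos]
  have habs1 : 1 < |(δ : ℝ)| := by
    by_contra h
    push_neg at h
    have : |(δ : ℝ)| ^ p ≤ 1 := pow_le_one₀ (abs_nonneg _) h
    linarith
  have hpisot' : IsPisot |(δ : ℝ)| :=
    key (α ^ n) _ p pp.two_le hnpisot hmem habs1 habs_pow
  have heq : |(δ : ℝ)| = α ^ (n / p) := by
    have h1 : (α ^ (n / p)) ^ p = α ^ n := by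
      rw [← pow_mul, Nat.div_mul_cancel hpn]
    exact (pow_left_inj₀ (abs_nonneg _) (by positivity) pp.ne_zero).mp (by rw [habs_pow, h1])
  have hlt : n / p < n := Nat.div_lt_self hnpos pp.one_lt
  exact Nat.find_min hex hlt ⟨dvd_trans (Nat.div_dvd_of_dvd hpn) hnk, heq ▸ hpisot'⟩
end
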